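/- Let g be a special oriented two-graph on r vertices. Then π(H(r)) ≥ r! / (|Aut(g)|·2^{C(r−1,2)}). -/

import Mathlib

def IsOrientedTwoGraph {V : Type*} (g : V → V → V → ℤ) : Prop :=
  (∀ x y z : V, g y x z = - g x y z) ∧
  (∀ x y z : V, g x z y = - g x y z) ∧
  (∀ x y z : V, x ≠ y → y ≠ z → x ≠ z → g x y z = 1 ∨ g x y z = -1) ∧
  (∀ x y z w : V, x ≠ y → x ≠ z → x ≠ w → y ≠ z → y ≠ w → z ≠ w →
    g x y z * g y x w * g z y w * g x z w = 1)

/-- Isomorphism of oriented two-graphs (on possibly different vertex sets). -/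
def TwoGraphIso {V₁ V₂ : Type*} (g₁ : V₁ → V₁ → V₁ → ℤ) (g₂ : V₂ → V₂ → V₂ → ℤ) : Prop :=
  ∃ φ : V₁ ≃ V₂, ∀ x y z, g₂ (φ x) (φ y) (φ z) = g₁ x y z

/-- The restriction `h|_A` of an oriented two-graph to a subset `A` of its vertices. -/
def restrict3 {W : Type*} (h : W → W → W → ℤ) (A : Finset W) :
    {a // a ∈ A} → {a // a ∈ A} → {a // a ∈ A} → ℤ :=
  fun x y z => h x.1 y.1 z.1

/-- An oriented two-graph `g` on `r` vertices is special if for every oriented two-graph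
`h` on a vertex set `W` of `r+1` vertices, at most `2` of the `r`-element subsets
`A ⊆ W` satisfy `h|_A ≅ g`. -/
def IsSpecial {V : Type} [Fintype V] (g : V → V → V → ℤ) : Prop :=
  ∀ (W : Type) [Fintype W], ∀ h : W → W → W → ℤ,
    IsOrientedTwoGraph h → Fintype.card W = Fintype.card V + 1 →
    {A : Finset W | A.card = Fintype.card V ∧ TwoGraphIso g (restrict3 h A)}.ncard ≤ 2

def autG {V : Type*} (g : V → V → V → ℤ) : Set (Equiv.Perm V) :=
  {σ | ∀ x y z, g (σ x) (σ y) (σ z) = g x y z}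

def TriangleFree (r : ℕ) {V : Type*} [DecidableEq V] (H : Finset (Finset V)) : Prop :=
  (∀ A ∈ H, A.card = r) ∧
  ∀ S : Finset V, S.card = r + 1 → (H.filter (fun A => A ⊆ S)).card ≤ 2

noncomputable def exTri (r n : ℕ) : ℕ :=
  sSup {m | ∃ H : Finset (Finset (Fin n)), TriangleFree r H ∧ H.card = m}

/-!
Orient the pairs of `Fin n` at random. Since `g` is special and every `(r+1)`-set carries an
oriented two-graph, the `r`-sets on which the random tournament induces a copy of `g` form an
`H(r)`-free `r`-graph. An `r`-set is such a copy with probability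
`(r! / |Aut g|) * 2^(r-1) / 2^C(r,2)`: there are `r! / |Aut g|` oriented two-graphs on `Fin r`
isomorphic to `g` (orbit-stabilizer), and each is the two-graph of `2^(r-1)` tournaments (a
switching class). So `ex(H(r), n) / C(n,r)` is at least `r! / (|Aut g| * 2^C(r-1,2))` for every
`n ≥ r`; it is non-increasing in `n` by averaging over vertex deletions, so its limit exists
and also satisfies that bound.
-/

open Finset

namespace IsOrientedTwoGraph

variable {V W : Type*} {g : V → V → V → ℤ}

lemma comp_injective (hg : IsOrientedTwoGraph g) {f : W → V} (hf : Function.Injective f) :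
    IsOrientedTwoGraph (fun x y z => g (f x) (f y) (f z)) :=
  ⟨fun _ _ _ => hg.1 _ _ _, fun _ _ _ => hg.2.1 _ _ _,
    fun _ _ _ hxy hyz hxz => hg.2.2.1 _ _ _ (hf.ne hxy) (hf.ne hyz) (hf.ne hxz),
    fun _ _ _ _ h₁ h₂ h₃ h₄ h₅ h₆ => hg.2.2.2 _ _ _ _ (hf.ne h₁) (hf.ne h₂) (hf.ne h₃)
      (hf.ne h₄) (hf.ne h₅) (hf.ne h₆)⟩

lemma restrict3 (hg : IsOrientedTwoGraph g) (A : Finset V) :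
    IsOrientedTwoGraph (_root_.restrict3 g A) :=
  hg.comp_injective Subtype.val_injective

lemma apply_rotate (hg : IsOrientedTwoGraph g) (x y z : V) : g y z x = g x y z := by
  rw [hg.2.1 y x z, hg.1 x y z, neg_neg]

lemma apply_eq_zero (hg : IsOrientedTwoGraph g) {x y z : V} (h : x = y ∨ y = z ∨ x = z) :
    g x y z = 0 := by
  rcases h with rfl | rfl | rfl
  · linarith [hg.1 x x z]
  · linarith [hg.2.1 x y y]
  · linarith [hg.2.1 x x y, hg.1 x x y]

lemma apply_mul_self (hg : IsOrientedTwoGraph g) {x y z : V} (hxy : x ≠ y) (hyz : y ≠ z)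
    (hxz : x ≠ z) : g x y z * g x y z = 1 := by
  rcases hg.2.2.1 x y z hxy hyz hxz with h | h <;> rw [h] <;> norm_num

/-- An oriented two-graph is determined by its values on the triples through one vertex `w`. -/
lemma apply_eq_neg_apex (hg : IsOrientedTwoGraph g) {x y z w : V} (hxy : x ≠ y) (hxz : x ≠ z)
    (hxw : x ≠ w) (hyz : y ≠ z) (hyw : y ≠ w) (hzw : z ≠ w) :
    g x y z = -(g w x y * g w y z * g w z x) := by
  have hcocycle := hg.2.2.2 x y z w hxy hxz hxw hyz hyw hzw
  rw [hg.apply_rotate w y x, hg.2.1 w x y, hg.apply_rotate w z y, hg.2.1 w y z,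
    hg.apply_rotate w x z, hg.2.1 w z x] at hcocycle
  have ha := hg.apply_mul_self hxw.symm hxy hyw.symm
  have hb := hg.apply_mul_self hyw.symm hyz hzw.symm
  have hc := hg.apply_mul_self hzw.symm hxz.symm hxw.symm
  linear_combination (-(g w x y * g w y z * g w z x)) * hcocycle
    - g x y z * (g w y z * g w y z * (g w z x * g w z x) * ha + g w z x * g w z x * hb + hc)

end IsOrientedTwoGraph

namespace TwoGraphIso

variable {V₁ V₂ V₃ : Type*} {g₁ : V₁ → V₁ → V₁ → ℤ} {g₂ : V₂ → V₂ → V₂ → ℤ}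
  {g₃ : V₃ → V₃ → V₃ → ℤ}

lemma symm (h : TwoGraphIso g₁ g₂) : TwoGraphIso g₂ g₁ := by
  obtain ⟨φ, hφ⟩ := h
  exact ⟨φ.symm, fun x y z => by simpa using (hφ (φ.symm x) (φ.symm y) (φ.symm z)).symm⟩

lemma trans (h₁₂ : TwoGraphIso g₁ g₂) (h₂₃ : TwoGraphIso g₂ g₃) : TwoGraphIso g₁ g₃ := by
  obtain ⟨φ, hφ⟩ := h₁₂
  obtain ⟨ψ, hψ⟩ := h₂₃
  exact ⟨φ.trans ψ, fun x y z => by simp [hψ, hφ]⟩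

lemma isOrientedTwoGraph (h : TwoGraphIso g₁ g₂) (hg : IsOrientedTwoGraph g₁) :
    IsOrientedTwoGraph g₂ := by
  obtain ⟨φ, hφ⟩ := h
  convert hg.comp_injective φ.symm.injective using 1
  funext x y z
  simp [← hφ]

lemma ncard_autG_eq (h : TwoGraphIso g₁ g₂) : (autG g₂).ncard = (autG g₁).ncard := by
  obtain ⟨φ, hφ⟩ := h
  suffices autG g₂ = φ.permCongr '' autG g₁ by
    rw [this, Set.ncard_image_of_injective _ φ.permCongr.injective]
  ext τ
  constructor
  · intro hτ
    refine ⟨φ.permCongr.symm τ, fun x y z => ?_, φ.permCongr.apply_symm_apply τ⟩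
    simpa [← hφ] using hτ (φ x) (φ y) (φ z)
  · rintro ⟨σ, hσ, rfl⟩ x y z
    obtain ⟨x, rfl⟩ := φ.surjective x
    obtain ⟨y, rfl⟩ := φ.surjective y
    obtain ⟨z, rfl⟩ := φ.surjective z
    simpa [← hφ] using hσ x y z

end TwoGraphIso

lemma twoGraphIso_restrict3_subtype {W : Type*} [DecidableEq W] (h : W → W → W → ℤ)
    {A S : Finset W} (hAS : A ⊆ S) :
    TwoGraphIso (restrict3 h A) (restrict3 (restrict3 h S) (A.subtype (· ∈ S))) :=
  ⟨⟨fun a => ⟨⟨a, hAS a.2⟩, Finset.mem_subtype.2 a.2⟩, fun b => ⟨b.1, Finset.mem_subtype.1 b.2⟩,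
    fun _ => rfl, fun _ => rfl⟩, fun _ _ _ => rfl⟩

lemma TriangleFree.mono {r : ℕ} {W : Type*} [DecidableEq W] {H H' : Finset (Finset W)}
    (hH : TriangleFree r H) (h : H' ⊆ H) : TriangleFree r H' :=
  ⟨fun A hA => hH.1 A (h hA), fun S hS =>
    (card_le_card (filter_subset_filter _ h)).trans (hH.2 S hS)⟩

open Classical in
lemma IsSpecial.triangleFree {V W : Type} [Fintype V] [Fintype W] [DecidableEq W]
    {g : V → V → V → ℤ} (hsp : IsSpecial g) {h : W → W → W → ℤ} (hh : IsOrientedTwoGraph h) :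
    TriangleFree (Fintype.card V)
      {A ∈ univ.powersetCard (Fintype.card V) | TwoGraphIso g (restrict3 h A)} := by
  refine ⟨fun A hA => (mem_powersetCard.1 (mem_filter.1 hA).1).2, fun S hS => ?_⟩
  refine le_trans ?_ (hsp S (restrict3 h S) (hh.restrict3 S) (by simpa using hS))
  rw [← Set.ncard_coe_finset]
  refine Set.ncard_le_ncard_of_injOn (fun A => A.subtype (· ∈ S)) ?_ ?_ (Set.toFinite _)
  · intro A hA
    simp only [coe_filter, mem_filter, mem_powersetCard, Set.mem_ofPred_eq] at hA
    obtain ⟨⟨⟨-, hAr⟩, hAg⟩, hAS⟩ := hA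
    refine ⟨?_, hAg.trans (twoGraphIso_restrict3_subtype h hAS)⟩
    rw [card_subtype, filter_true_of_mem hAS, hAr]
  · intro A hA B hB hAB
    simp only [coe_filter, mem_filter, Set.mem_ofPred_eq] at hA hB
    rw [← subtype_map_of_mem hA.2, ← subtype_map_of_mem hB.2]
    exact congrArg _ hAB

lemma bddAbove_card_triangleFree (r n : ℕ) :
    BddAbove {m | ∃ H : Finset (Finset (Fin n)), TriangleFree r H ∧ H.card = m} :=
  ⟨_, fun _ ⟨H, _, hH⟩ => hH ▸ card_le_univ H⟩

lemma exists_triangleFree_card_eq_exTri (r n : ℕ) :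
    ∃ H : Finset (Finset (Fin n)), TriangleFree r H ∧ H.card = exTri r n :=
  Nat.sSup_mem (s := {m | ∃ H : Finset (Finset (Fin n)), TriangleFree r H ∧ H.card = m})
    ⟨0, ∅, ⟨by simp, by simp⟩, rfl⟩ (bddAbove_card_triangleFree r n)

lemma TriangleFree.card_le_exTri {r n : ℕ} {H : Finset (Finset (Fin n))}
    (hH : TriangleFree r H) : H.card ≤ exTri r n :=
  le_csSup (bddAbove_card_triangleFree r n) ⟨H, hH, rfl⟩

lemma TriangleFree.card_le_exTri_of_subset_range {r n : ℕ} {W : Type*} [DecidableEq W]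
    {H : Finset (Finset W)} (hH : TriangleFree r H) (e : Fin n ↪ W)
    (hrange : ∀ A ∈ H, ↑A ⊆ Set.range e) : H.card ≤ exTri r n := by
  classical
  let H' : Finset (Finset (Fin n)) := {B | B.map e ∈ H}
  have hH' : TriangleFree r H' := by
    refine ⟨fun B hB => by simpa using hH.1 _ (mem_filter.1 hB).2, fun S hS => ?_⟩
    refine le_trans ?_ (hH.2 (S.map e) (by simpa using hS))
    refine card_le_card_of_injOn (Finset.map e) (fun B hB => ?_) (Finset.map_injective e).injOn
    simp only [coe_filter, mem_filter, mem_univ, true_and, Set.mem_ofPred_eq, H'] at hB ⊢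
    exact ⟨hB.1, map_subset_map.2 hB.2⟩
  refine le_trans (card_le_card_of_surjOn (Finset.map e) fun A hA => ?_) hH'.card_le_exTri
  obtain ⟨B, -, rfl⟩ := subset_map_iff.1 (fun x hx => by
    obtain ⟨y, rfl⟩ := hrange A hA hx
    exact mem_map_of_mem e (mem_univ y) : A ⊆ univ.map e)
  exact ⟨B, by simpa [H'] using hA, rfl⟩

lemma exTri_mul_le (r n : ℕ) : exTri r (n + 1) * (n + 1 - r) ≤ (n + 1) * exTri r n := by
  classical
  obtain ⟨H, hH, hcard⟩ := exists_triangleFree_card_eq_exTri r (n + 1)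
  have h := card_nsmul_le_card_nsmul (s := H) (t := (univ : Finset (Fin (n + 1))))
    (fun A v => v ∉ A) (R := ℕ) (m := n + 1 - r) (n := exTri r n) ?_ ?_
  · simpa [hcard, mul_comm] using h
  · intro A hA
    rw [bipartiteAbove, filter_not, filter_mem_eq_inter, univ_inter, ← compl_eq_univ_sdiff,
      card_compl, Fintype.card_fin, hH.1 A hA, Nat.cast_id]
  · intro v _
    refine (hH.mono (filter_subset _ _)).card_le_exTri_of_subset_range v.succAboveEmb ?_
    intro A hA x hx
    simpa using fun hxv : x = v => (mem_filter.1 hA).2 (hxv ▸ hx)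

lemma antitoneOn_exTri_div_choose (r : ℕ) :
    AntitoneOn (fun n => (exTri r n : ℝ) / n.choose r) (Set.Ici r) := by
  refine antitoneOn_nat_Ici_of_succ_le fun n (hn : r ≤ n) => ?_
  have hpos : ∀ m, r ≤ m → (0 : ℝ) < m.choose r := fun m hm => by
    exact_mod_cast Nat.choose_pos hm
  rw [div_le_div_iff₀ (hpos _ (hn.trans n.le_succ)) (hpos n hn)]
  have key : exTri r (n + 1) * n.choose r * (n + 1) ≤ exTri r n * (n + 1).choose r * (n + 1) :=
    calc exTri r (n + 1) * n.choose r * (n + 1)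
        = exTri r (n + 1) * (n + 1 - r) * (n + 1).choose r := by
          rw [mul_assoc, Nat.choose_mul_succ_eq]; ring
      _ ≤ (n + 1) * exTri r n * (n + 1).choose r := Nat.mul_le_mul_right _ (exTri_mul_le r n)
      _ = exTri r n * (n + 1).choose r * (n + 1) := by ring
  exact_mod_cast Nat.le_of_mul_le_mul_right key n.succ_pos

def boolSign (b : Bool) : ℤ := if b then 1 else -1

lemma boolSign_mul_self (b : Bool) : boolSign b * boolSign b = 1 := by
  cases b <;> simp [boolSign]

lemma boolSign_eq_one_or (b : Bool) : boolSign b = 1 ∨ boolSign b = -1 := by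
  cases b <;> simp [boolSign]

lemma boolSign_decide_eq_one {e : ℤ} (he : e = 1 ∨ e = -1) : boolSign (decide (e = 1)) = e := by
  rcases he with rfl | rfl <;> simp [boolSign]

def IsTournament {α : Type*} (t : α → α → ℤ) : Prop :=
  (∀ x y, t y x = -t x y) ∧ ∀ x y, x ≠ y → t x y = 1 ∨ t x y = -1

def twoGraphOf {α : Type*} (t : α → α → ℤ) : α → α → α → ℤ :=
  fun x y z => -(t x y * t y z * t z x)

/-- Seidel switching of a tournament: reverse every arc between `{s = true}` and `{s = false}`. -/
def switching {α : Type*} (s : α → Bool) (t : α → α → ℤ) : α → α → ℤ :=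
  fun x y => boolSign (s x) * boolSign (s y) * t x y

namespace IsTournament

variable {α : Type*} {t : α → α → ℤ}

lemma apply_self (ht : IsTournament t) (x : α) : t x x = 0 := by
  linarith [ht.1 x x]

lemma mul_self (ht : IsTournament t) {x y : α} (h : x ≠ y) : t x y * t x y = 1 := by
  rcases ht.2 x y h with h' | h' <;> rw [h'] <;> norm_num

lemma isOrientedTwoGraph_twoGraphOf (ht : IsTournament t) : IsOrientedTwoGraph (twoGraphOf t) := by
  refine ⟨fun x y z => ?_, fun x y z => ?_, fun x y z hxy hyz hxz => ?_,
    fun x y z w hxy hxz hxw hyz hyw hzw => ?_⟩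
  · simp only [twoGraphOf, ht.1 x y, ht.1 z x, ht.1 y z]; ring
  · simp only [twoGraphOf, ht.1 z x, ht.1 y z, ht.1 x y]; ring
  · rcases ht.2 x y hxy with h₁ | h₁ <;> rcases ht.2 y z hyz with h₂ | h₂ <;>
      rcases ht.2 z x hxz.symm with h₃ | h₃ <;> simp [twoGraphOf, h₁, h₂, h₃]
  · simp only [twoGraphOf, ht.1 x y, ht.1 y w, ht.1 y z, ht.1 z w, ht.1 z x, ht.1 x w]
    -- every arc of the four triangles occurs exactly twice
    calc _ = (t x y * t x y) * (t y z * t y z) * (t z x * t z x) * (t x w * t x w) *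
          (t y w * t y w) * (t z w * t z w) := by ring
      _ = 1 := by
        rw [ht.mul_self hxy, ht.mul_self hyz, ht.mul_self hxz.symm, ht.mul_self hxw,
          ht.mul_self hyw, ht.mul_self hzw]; ring

lemma switching (ht : IsTournament t) (s : α → Bool) : IsTournament (switching s t) := by
  refine ⟨fun x y => ?_, fun x y hxy => ?_⟩
  · simp only [_root_.switching, ht.1 x y]; ring
  · rcases boolSign_eq_one_or (s x) with hx | hx <;>
      rcases boolSign_eq_one_or (s y) with hy | hy <;>
      rcases ht.2 x y hxy with h | h <;> simp [_root_.switching, hx, hy, h]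

end IsTournament

lemma twoGraphOf_switching {α : Type*} (s : α → Bool) (t : α → α → ℤ) :
    twoGraphOf (switching s t) = twoGraphOf t := by
  funext x y z
  calc twoGraphOf (switching s t) x y z
      = (boolSign (s x) * boolSign (s x)) * (boolSign (s y) * boolSign (s y)) *
          (boolSign (s z) * boolSign (s z)) * twoGraphOf t x y z := by
        simp only [twoGraphOf, switching]; ring
    _ = twoGraphOf t x y z := by simp only [boolSign_mul_self, one_mul]

def apexTournament {k : ℕ} (h : Fin (k + 1) → Fin (k + 1) → Fin (k + 1) → ℤ) :
    Fin (k + 1) → Fin (k + 1) → ℤ :=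
  fun x y => if x = y then 0 else if x = 0 then 1 else if y = 0 then -1 else h 0 x y

section Apex

variable {k : ℕ} {h : Fin (k + 1) → Fin (k + 1) → Fin (k + 1) → ℤ}

lemma apexTournament_zero_left {y : Fin (k + 1)} (hy : y ≠ 0) : apexTournament h 0 y = 1 := by
  simp [apexTournament, hy.symm]

lemma apexTournament_zero_right {x : Fin (k + 1)} (hx : x ≠ 0) : apexTournament h x 0 = -1 := by
  simp [apexTournament, hx]

lemma apexTournament_of_ne {x y : Fin (k + 1)} (hxy : x ≠ y) (hx : x ≠ 0) (hy : y ≠ 0) :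
    apexTournament h x y = h 0 x y := by
  simp [apexTournament, hxy, hx, hy]

lemma isTournament_apexTournament (hh : IsOrientedTwoGraph h) :
    IsTournament (apexTournament h) := by
  refine ⟨fun x y => ?_, fun x y hxy => ?_⟩
  · by_cases hxy : x = y
    · simp [apexTournament, hxy]
    by_cases hx : x = 0
    · subst hx
      rw [apexTournament_zero_left (Ne.symm hxy), apexTournament_zero_right (Ne.symm hxy)]
    by_cases hy : y = 0
    · subst hy
      rw [apexTournament_zero_left hx, apexTournament_zero_right hx, neg_neg]
    rw [apexTournament_of_ne hxy hx hy, apexTournament_of_ne (Ne.symm hxy) hy hx, hh.2.1]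
  · by_cases hx : x = 0
    · subst hx
      exact .inl (apexTournament_zero_left (Ne.symm hxy))
    by_cases hy : y = 0
    · subst hy
      exact .inr (apexTournament_zero_right hx)
    rw [apexTournament_of_ne hxy hx hy]
    exact hh.2.2.1 0 x y (Ne.symm hx) hxy (Ne.symm hy)

lemma twoGraphOf_apexTournament (hh : IsOrientedTwoGraph h) :
    twoGraphOf (apexTournament h) = h := by
  funext x y z
  by_cases hdeg : x = y ∨ y = z ∨ x = z
  · rw [hh.apply_eq_zero hdeg]
    rcases hdeg with rfl | rfl | rfl <;>
      simp [twoGraphOf, (isTournament_apexTournament hh).apply_self]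
  push Not at hdeg
  obtain ⟨hxy, hyz, hxz⟩ := hdeg
  simp only [twoGraphOf]
  by_cases hx : x = 0
  · subst hx
    rw [apexTournament_zero_left (Ne.symm hxy), apexTournament_of_ne hyz (Ne.symm hxy)
      (Ne.symm hxz), apexTournament_zero_right (Ne.symm hxz)]
    ring
  by_cases hy : y = 0
  · subst hy
    rw [apexTournament_zero_right hx, apexTournament_zero_left (Ne.symm hyz),
      apexTournament_of_ne (Ne.symm hxz) (Ne.symm hyz) hx, ← hh.apply_rotate x 0 z]
    ring
  by_cases hz : z = 0
  · subst hz
    rw [apexTournament_of_ne hxy hx hy, apexTournament_zero_right hy, apexTournament_zero_left hx,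
      hh.apply_rotate 0 x y]
    ring
  rw [apexTournament_of_ne hxy hx hy, apexTournament_of_ne hyz hy hz,
    apexTournament_of_ne (Ne.symm hxz) hz hx, hh.apply_eq_neg_apex hxy hxz hx hyz hy hz]

end Apex

abbrev IncPair (α : Type*) [LT α] := {p : α × α // p.1 < p.2}

def pairTournament {α : Type*} [LinearOrder α] (v : IncPair α → Bool) : α → α → ℤ :=
  fun x y => if h : x < y then boolSign (v ⟨(x, y), h⟩)
    else if h' : y < x then -boolSign (v ⟨(y, x), h'⟩) else 0

def IncPair.map {α β : Type*} [Preorder α] [Preorder β] (f : α → β) (hf : StrictMono f) :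
    IncPair α → IncPair β :=
  fun q => ⟨(f q.1.1, f q.1.2), hf q.2⟩

lemma IncPair.map_injective {α β : Type*} [LinearOrder α] [Preorder β] {f : α → β}
    (hf : StrictMono f) : Function.Injective (IncPair.map f hf) := by
  rintro ⟨⟨a, b⟩, _⟩ ⟨⟨c, d⟩, _⟩ h
  simp only [IncPair.map, Subtype.mk.injEq, Prod.mk.injEq] at h
  exact Subtype.ext (Prod.ext (hf.injective h.1) (hf.injective h.2))

section PairTournament

variable {α : Type*} [LinearOrder α]

lemma pairTournament_of_lt (v : IncPair α → Bool) {x y : α} (h : x < y) :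
    pairTournament v x y = boolSign (v ⟨(x, y), h⟩) := dif_pos h

lemma isTournament_pairTournament (v : IncPair α → Bool) : IsTournament (pairTournament v) := by
  refine ⟨fun x y => ?_, fun x y hxy => ?_⟩
  · rcases lt_trichotomy x y with h | rfl | h
    · simp [pairTournament, h, h.not_gt]
    · simp [pairTournament]
    · simp [pairTournament, h, h.not_gt]
  · rcases hxy.lt_or_gt with h | h
    · exact pairTournament_of_lt v h ▸ boolSign_eq_one_or _
    · rw [pairTournament, dif_neg h.not_gt, dif_pos h]
      rcases boolSign_eq_one_or (v ⟨(y, x), h⟩) with h' | h' <;> simp [h']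

lemma pairTournament_decide {t : α → α → ℤ} (ht : IsTournament t) :
    pairTournament (fun q => decide (t q.1.1 q.1.2 = 1)) = t := by
  funext x y
  rcases lt_trichotomy x y with h | rfl | h
  · rw [pairTournament_of_lt _ h, boolSign_decide_eq_one (ht.2 x y h.ne)]
  · rw [(isTournament_pairTournament _).apply_self, ht.apply_self]
  · rw [(isTournament_pairTournament _).1, pairTournament_of_lt _ h,
      boolSign_decide_eq_one (ht.2 y x h.ne), ht.1, neg_neg]

lemma pairTournament_apply_strictMono {β : Type*} [LinearOrder β] {f : α → β}
    (hf : StrictMono f) (v : IncPair β → Bool) (x y : α) :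
    pairTournament v (f x) (f y) = pairTournament (v ∘ IncPair.map f hf) x y := by
  rcases lt_trichotomy x y with h | rfl | h
  · rw [pairTournament_of_lt _ h, pairTournament_of_lt _ (hf h)]; rfl
  · rw [(isTournament_pairTournament _).apply_self, (isTournament_pairTournament _).apply_self]
  · rw [(isTournament_pairTournament _).1, pairTournament_of_lt _ (hf h),
      (isTournament_pairTournament (v ∘ _)).1, pairTournament_of_lt _ h]; rfl

end PairTournament

/-- The switchings of `apexTournament h` that fix the side of `0` are `2 ^ (r - 1)` distinct
tournaments with two-graph `h` (in fact these are all of them). -/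
lemma two_pow_le_card_twoGraphOf_eq {r : ℕ} {h : Fin r → Fin r → Fin r → ℤ}
    (hh : IsOrientedTwoGraph h) :
    2 ^ (r - 1) ≤ #{v : IncPair (Fin r) → Bool | twoGraphOf (pairTournament v) = h} := by
  cases r with
  | zero =>
    exact card_pos.2 ⟨fun _ => true, mem_filter.2 ⟨mem_univ _, Subsingleton.elim _ _⟩⟩
  | succ k =>
    let t := apexTournament h
    have ht : IsTournament t := isTournament_apexTournament hh
    let encode : (Fin k → Bool) → IncPair (Fin (k + 1)) → Bool := fun w q =>
      decide (switching (Fin.cons true w : Fin (k + 1) → Bool) t q.1.1 q.1.2 = 1)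
    have hencode : ∀ w, pairTournament (encode w) = switching (Fin.cons true w) t :=
      fun w => pairTournament_decide (ht.switching _)
    calc 2 ^ (k + 1 - 1) = #(univ : Finset (Fin k → Bool)) := by simp
      _ ≤ _ := by
        refine card_le_card_of_injOn encode (fun w _ => ?_) (fun w _ w' _ hww' => ?_)
        · simp [hencode, twoGraphOf_switching, t, twoGraphOf_apexTournament hh]
        · funext m
          -- the arc between `0` and `m.succ` records `w m`
          have := congrFun hww' ⟨(0, m.succ), Fin.succ_pos m⟩
          simpa [encode, switching, boolSign, t, apexTournament_zero_left (Fin.succ_ne_zero m)]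
            using this

instance {α : Type*} : MulAction (Equiv.Perm α) (α → α → α → ℤ) where
  smul σ f x y z := f (σ⁻¹ x) (σ⁻¹ y) (σ⁻¹ z)
  one_smul _ := rfl
  mul_smul _ _ _ := rfl

section PermAction

open MulAction

variable {α : Type*}

lemma perm_smul_apply (σ : Equiv.Perm α) (f : α → α → α → ℤ) (x y z : α) :
    (σ • f) x y z = f (σ⁻¹ x) (σ⁻¹ y) (σ⁻¹ z) := rfl

lemma mem_orbit_iff_twoGraphIso {g h : α → α → α → ℤ} :
    h ∈ orbit (Equiv.Perm α) g ↔ TwoGraphIso g h := by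
  constructor
  · rintro ⟨σ, rfl⟩
    exact ⟨σ, fun x y z => by simp [perm_smul_apply]⟩
  · rintro ⟨φ, hφ⟩
    refine ⟨φ, funext fun x => funext fun y => funext fun z => ?_⟩
    simpa [perm_smul_apply] using (hφ (φ⁻¹ x) (φ⁻¹ y) (φ⁻¹ z)).symm

lemma coe_stabilizer_eq_autG (g : α → α → α → ℤ) :
    (stabilizer (Equiv.Perm α) g : Set (Equiv.Perm α)) = autG g := by
  ext σ
  simp only [SetLike.mem_coe, mem_stabilizer_iff]
  constructor
  · intro hσ x y z
    simpa [perm_smul_apply] using (congrFun (congrFun (congrFun hσ (σ x)) (σ y)) (σ z)).symm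
  · intro hσ
    funext x y z
    simpa [perm_smul_apply] using (hσ (σ⁻¹ x) (σ⁻¹ y) (σ⁻¹ z)).symm

lemma ncard_orbit_mul_ncard_autG [Finite α] (g : α → α → α → ℤ) :
    (orbit (Equiv.Perm α) g).ncard * (autG g).ncard = (Nat.card α).factorial := by
  rw [← index_stabilizer, ← coe_stabilizer_eq_autG, ← Nat.card_coe_set_eq, mul_comm,
    SetLike.coe_sort_coe, Subgroup.card_mul_index, Nat.card_perm]

end PermAction

open Classical in
lemma factorial_mul_two_pow_le_fin {r : ℕ} {g : Fin r → Fin r → Fin r → ℤ}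
    (hg : IsOrientedTwoGraph g) :
    r.factorial * 2 ^ (r - 1) ≤
      #{v : IncPair (Fin r) → Bool | TwoGraphIso g (twoGraphOf (pairTournament v))} *
        (autG g).ncard := by
  have hfin : (MulAction.orbit (Equiv.Perm (Fin r)) g).Finite := Set.finite_range _
  let O := hfin.toFinset
  have hO : ∀ h ∈ O, TwoGraphIso g h := fun h hh =>
    mem_orbit_iff_twoGraphIso.1 ((Set.Finite.mem_toFinset _).1 hh)
  -- sort the tournaments by their two-graph, which runs over the orbit of `g`
  have hfibers : 2 ^ (r - 1) * #O ≤
      #{v : IncPair (Fin r) → Bool | TwoGraphIso g (twoGraphOf (pairTournament v))} := by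
    refine mul_card_image_le_card_of_maps_to (f := fun v => twoGraphOf (pairTournament v))
      (fun v hv => (Set.Finite.mem_toFinset _).2 (mem_orbit_iff_twoGraphIso.2
        (mem_filter.1 hv).2)) _ fun h hh => ?_
    rw [filter_filter, filter_congr fun v _ => and_iff_right_of_imp fun hv => hv ▸ hO h hh]
    exact two_pow_le_card_twoGraphOf_eq ((hO h hh).isOrientedTwoGraph hg)
  have horbit := ncard_orbit_mul_ncard_autG g
  rw [Nat.card_eq_fintype_card, Fintype.card_fin, Set.ncard_eq_toFinset_card _ hfin]
    at horbit
  calc r.factorial * 2 ^ (r - 1) = 2 ^ (r - 1) * #O * (autG g).ncard := by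
        rw [← horbit]; ring
    _ ≤ _ := Nat.mul_le_mul_right _ hfibers

open Classical in
lemma factorial_mul_two_pow_le {V : Type*} [Fintype V] {g : V → V → V → ℤ}
    (hg : IsOrientedTwoGraph g) :
    (Fintype.card V).factorial * 2 ^ (Fintype.card V - 1) ≤
      #{v : IncPair (Fin (Fintype.card V)) → Bool |
          TwoGraphIso g (twoGraphOf (pairTournament v))} * (autG g).ncard := by
  let e := Fintype.equivFin V
  have hiso : TwoGraphIso g (fun x y z => g (e.symm x) (e.symm y) (e.symm z)) :=
    ⟨e, fun x y z => by simp⟩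
  convert factorial_mul_two_pow_le_fin (hg.comp_injective e.symm.injective) using 3
  · exact filter_congr fun v _ => ⟨hiso.symm.trans, hiso.trans⟩
  · exact hiso.ncard_autG_eq.symm

lemma card_filter_comp_injective {α β γ : Type*} [Fintype α] [Fintype β] [Fintype γ]
    [DecidableEq α] [DecidableEq β] {j : β → α} (hj : Function.Injective j) (Q : (β → γ) → Prop)
    [DecidablePred Q] :
    #{u : α → γ | Q (u ∘ j)} =
      #{w : β → γ | Q w} * Fintype.card γ ^ (Fintype.card α - Fintype.card β) := by
  let E : (α → γ) ≃ (β → γ) × ({a // a ∉ Set.range j} → γ) :=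
    (Equiv.piEquivPiSubtypeProd (· ∈ Set.range j) fun _ => γ).trans
      (((Equiv.ofInjective j hj).symm.arrowCongr (Equiv.refl γ)).prodCongr (Equiv.refl _))
  have hE : ∀ u, (E u).1 = u ∘ j := fun _ => rfl
  rw [card_equiv E (t := ({w | Q w} : Finset _) ×ˢ univ) fun u => by simp [hE], card_product,
    card_univ, Fintype.card_fun, Fintype.card_subtype_compl, Set.card_range_of_injective hj]

lemma card_incPair_fin (n : ℕ) : Fintype.card (IncPair (Fin n)) = n.choose 2 := by
  rw [Fintype.card_subtype, ← univ_product_univ, card_product_filter_lt, card_univ,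
    Fintype.card_fin]

open Classical in
lemma card_twoGraphIso_restrict3 {V : Type*} [Fintype V] (g : V → V → V → ℤ) {n : ℕ}
    {A : Finset (Fin n)} (hA : #A = Fintype.card V) :
    #{u : IncPair (Fin n) → Bool |
        TwoGraphIso g (restrict3 (twoGraphOf (pairTournament u)) A)} =
      #{v : IncPair (Fin (Fintype.card V)) → Bool |
          TwoGraphIso g (twoGraphOf (pairTournament v))} *
        2 ^ (n.choose 2 - (Fintype.card V).choose 2) := by
  let ι := A.orderEmbOfFin hA
  have hrestrict : ∀ u,
      TwoGraphIso (twoGraphOf (pairTournament (u ∘ IncPair.map ι ι.strictMono)))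
        (restrict3 (twoGraphOf (pairTournament u)) A) := fun u =>
    ⟨(A.orderIsoOfFin hA).toEquiv, fun x y z => by
      simp [restrict3, twoGraphOf, pairTournament_apply_strictMono ι.strictMono, ι]⟩
  rw [filter_congr fun u _ =>
      ⟨fun h => h.trans (hrestrict u).symm, fun h => h.trans (hrestrict u)⟩,
    card_filter_comp_injective (IncPair.map_injective ι.strictMono)
      (fun v => TwoGraphIso g (twoGraphOf (pairTournament v))),
    Fintype.card_bool, card_incPair_fin, card_incPair_fin]

open Classical in
/-- Double count the pairs `(u, A)` such that the tournament `u` induces a copy of `g` on `A`: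
each `r`-set `A` is in `C * 2 ^ (C(n,2) - C(r,2))` of them, and each `u` in at most
`exTri r n`, since its copies of the special `g` form an `H(r)`-free family. -/
lemma choose_mul_card_twoGraphIso_le {V : Type} [Fintype V] {g : V → V → V → ℤ}
    (hsp : IsSpecial g) {n : ℕ} (hn : Fintype.card V ≤ n) :
    n.choose (Fintype.card V) * #{v : IncPair (Fin (Fintype.card V)) → Bool |
        TwoGraphIso g (twoGraphOf (pairTournament v))} ≤
      exTri (Fintype.card V) n * 2 ^ (Fintype.card V).choose 2 := by
  set r := Fintype.card V
  set C := #{v : IncPair (Fin r) → Bool | TwoGraphIso g (twoGraphOf (pairTournament v))}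
  have hcount := card_nsmul_le_card_nsmul (R := ℕ)
    (s := (univ.powersetCard r : Finset (Finset (Fin n))))
    (t := (univ : Finset (IncPair (Fin n) → Bool)))
    (fun A u => TwoGraphIso g (restrict3 (twoGraphOf (pairTournament u)) A))
    (m := C * 2 ^ (n.choose 2 - r.choose 2)) (n := exTri r n)
    (fun A hA => (card_twoGraphIso_restrict3 g (mem_powersetCard.1 hA).2).ge)
    (fun u _ => (hsp.triangleFree (isTournament_pairTournament u).isOrientedTwoGraph_twoGraphOf
      ).card_le_exTri)
  obtain ⟨d, hd⟩ := Nat.exists_eq_add_of_le (Nat.choose_le_choose 2 hn)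
  rw [card_powersetCard, card_univ, card_univ, Fintype.card_fun, Fintype.card_bool,
    card_incPair_fin, Fintype.card_fin, smul_eq_mul, smul_eq_mul, hd, Nat.add_sub_cancel_left,
    pow_add] at hcount
  refine Nat.le_of_mul_le_mul_left ?_ (pow_pos two_pos d)
  calc 2 ^ d * (n.choose r * C) = n.choose r * (C * 2 ^ d) := by ring
    _ ≤ 2 ^ r.choose 2 * 2 ^ d * exTri r n := hcount
    _ = 2 ^ d * (exTri r n * 2 ^ r.choose 2) := by ring

lemma choose_two_eq_pred (r : ℕ) : r.choose 2 = (r - 1).choose 2 + (r - 1) := by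
  cases r with
  | zero => rfl
  | succ k => rw [Nat.choose_succ_succ', Nat.choose_one_right, add_comm, Nat.add_sub_cancel]

lemma factorial_div_le_exTri_div_choose {V : Type} [Fintype V] {g : V → V → V → ℤ}
    (hg : IsOrientedTwoGraph g) (hsp : IsSpecial g) {n : ℕ} (hn : Fintype.card V ≤ n) :
    ((Fintype.card V).factorial : ℝ) / ((autG g).ncard * 2 ^ (Fintype.card V - 1).choose 2) ≤
      exTri (Fintype.card V) n / n.choose (Fintype.card V) := by
  classical
  set r := Fintype.card V
  set C := #{v : IncPair (Fin r) → Bool | TwoGraphIso g (twoGraphOf (pairTournament v))}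
  have hcount := factorial_mul_two_pow_le hg
  have hdouble := choose_mul_card_twoGraphIso_le hsp hn
  have hkey : n.choose r * r.factorial ≤ exTri r n * ((autG g).ncard * 2 ^ (r - 1).choose 2) := by
    refine Nat.le_of_mul_le_mul_right ?_ (pow_pos two_pos (r - 1))
    calc n.choose r * r.factorial * 2 ^ (r - 1) = n.choose r * (r.factorial * 2 ^ (r - 1)) := by
          ring
      _ ≤ n.choose r * (C * (autG g).ncard) := Nat.mul_le_mul_left _ hcount
      _ = n.choose r * C * (autG g).ncard := by ring
      _ ≤ exTri r n * 2 ^ r.choose 2 * (autG g).ncard := Nat.mul_le_mul_right _ hdouble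
      _ = _ := by rw [choose_two_eq_pred r, pow_add]; ring
  have haut : 0 < (autG g).ncard := (Set.ncard_pos (Set.toFinite _)).2 ⟨1, fun _ _ _ => rfl⟩
  have hchoose : 0 < n.choose r := Nat.choose_pos hn
  rw [div_le_div_iff₀ (by positivity) (by exact_mod_cast hchoose)]
  exact_mod_cast (mul_comm _ _).le.trans hkey

/-- if `g` is a special oriented two-graph on `r` vertices then the Turán
density `π(H(r))` (the limit of `ex(H(r),n)/C(n,r)`, which exists) satisfies
`π(H(r)) ≥ r! / (|Aut(g)|·2^(C(r-1,2)))`. -/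
theorem statement10 {V : Type} [Fintype V] (g : V → V → V → ℤ)
    (hg : IsOrientedTwoGraph g) (hsp : IsSpecial g) :
    ∃ L : ℝ,
      Filter.Tendsto
        (fun n => (exTri (Fintype.card V) n : ℝ) / (n.choose (Fintype.card V) : ℝ))
        Filter.atTop (nhds L) ∧
      (Nat.factorial (Fintype.card V) : ℝ) /
          (((autG g).ncard : ℝ) * 2 ^ (Fintype.card V - 1).choose 2) ≤ L := by
  set f : ℕ → ℝ := fun n => (exTri (Fintype.card V) n : ℝ) / n.choose (Fintype.card V)
  have hbound : ∀ y ∈ f '' Set.Ici (Fintype.card V), (Fintype.card V).factorial /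
      ((autG g).ncard * 2 ^ (Fintype.card V - 1).choose 2 : ℝ) ≤ y := by
    rintro _ ⟨n, hn, rfl⟩
    exact factorial_div_le_exTri_div_choose hg hsp hn
  exact ⟨_, Real.tendsto_atTop_csInf_of_antitoneOn_bddBelow_nat_Ici
    (antitoneOn_exTri_div_choose _) ⟨_, hbound⟩,
    le_csInf (Set.nonempty_Ici.image f) hbound⟩
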